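/- arXiv:2504.06066 — 2 statements merged into one kernel-verified Lean document; each statement's English description precedes it below -/
import Mathlib

section
/- Let σ : K* ⊗ H → k be a Hopf pairing between finite-dimensional Hopf algebras. The map ι : H → K^{op} ⊗ H, h ↦ Σ σ_r(S^{-1}(h₂)) ⊗ h₁ is an injective algebra homomorphism, and the map π : K^{op} ⊗ H → K^{op}, k ⊗ h ↦ k σ_r(h) is a surjective coalgebra homomorphism which is a map of right K^{op} ⊗ H-modules. -/
open TensorProduct LinearMap Coalgebra Module

noncomputable section

variable (k : Type) [Field k]

/-- Convolution product of two linear functionals on a coalgebra. -/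
def fconv (C : Type) [AddCommGroup C] [Module k C] [Coalgebra k C]
    (f g : C →ₗ[k] k) : C →ₗ[k] k :=
  LinearMap.mul' k k ∘ₗ TensorProduct.map f g ∘ₗ Coalgebra.comul

/-- The comultiplication of the dual coalgebra of a finite-dimensional algebra. -/
def dcomul (K : Type) [Ring K] [Algebra k K] [Module.Finite k K] :
    Module.Dual k K →ₗ[k] Module.Dual k K ⊗[k] Module.Dual k K :=
  (TensorProduct.dualDistribEquiv k K K).symm.toLinearMap ∘ₗ (LinearMap.mul' k K).dualMap

variable (K H : Type) [Ring K] [Ring H] [HopfAlgebra k K] [HopfAlgebra k H]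
  [Module.Finite k K] [Module.Finite k H]

/-- The map `σ_r : H → K` induced by a pairing `σ : K* ⊗ H → k` (curried as `σ : K* → H*`),
via the canonical identification `K ≅ K**`. -/
def sigmaR (σ : Module.Dual k K →ₗ[k] Module.Dual k H) : H →ₗ[k] K :=
  (Module.evalEquiv k K).symm.toLinearMap ∘ₗ σ.flip

/-- The opposite multiplication of `K`, i.e. the multiplication of `K^{op}`
(`k ⊗ k' ↦ k' * k`), on the underlying space `K`. -/
def opMul : K ⊗[k] K →ₗ[k] K :=
  LinearMap.mul' k K ∘ₗ (TensorProduct.comm k K K).toLinearMap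

/-- The multiplication of the tensor product algebra `K^{op} ⊗ H`
(on the underlying space `K ⊗ H`). -/
def mulB : (K ⊗[k] H) ⊗[k] (K ⊗[k] H) →ₗ[k] K ⊗[k] H :=
  TensorProduct.map (opMul k K) (LinearMap.mul' k H)
    ∘ₗ (TensorProduct.tensorTensorTensorComm k K H K H).toLinearMap

/-- The unit of `K^{op} ⊗ H`. -/
def oneB : K ⊗[k] H := (1 : K) ⊗ₜ[k] (1 : H)

/-- The comultiplication of the tensor product coalgebra `K^{op} ⊗ H`
(`K^{op}` has the same comultiplication as `K`). -/
def comulB : K ⊗[k] H →ₗ[k] (K ⊗[k] H) ⊗[k] (K ⊗[k] H) :=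
  (TensorProduct.tensorTensorTensorComm k K K H H).toLinearMap
    ∘ₗ TensorProduct.map Coalgebra.comul Coalgebra.comul

/-- The counit of the coalgebra `K^{op} ⊗ H`. -/
def epsB : K ⊗[k] H →ₗ[k] k :=
  LinearMap.mul' k k ∘ₗ
    TensorProduct.map (Coalgebra.counit (R := k) (A := K)) (Coalgebra.counit (R := k) (A := H))

/-- The coaction `ρ : H → (K^{op} ⊗ H) ⊗ H`, `h ↦ Σ (σ_r(S⁻¹(h₍₃₎)) ⊗ h₍₁₎) ⊗ h₍₂₎`. -/
def rhoH (σ : Module.Dual k K →ₗ[k] Module.Dual k H) (Sinv : H →ₗ[k] H) :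
    H →ₗ[k] (K ⊗[k] H) ⊗[k] H :=
  (TensorProduct.assoc k K H H).symm.toLinearMap
    ∘ₗ TensorProduct.map (sigmaR k K H σ ∘ₗ Sinv) .id
    ∘ₗ (TensorProduct.comm k (H ⊗[k] H) H).toLinearMap
    ∘ₗ TensorProduct.map Coalgebra.comul .id ∘ₗ Coalgebra.comul

/-- The right `K^{op} ⊗ H`-action on `K^{op}`:
`l ⊗ (κ ⊗ h) ↦ κ l σ_r(h)`, where the product is written in `K`
(i.e. the element `κ * l * σ_r(h)` of `K`). -/
def actK (σ : Module.Dual k K →ₗ[k] Module.Dual k H) :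
    K ⊗[k] (K ⊗[k] H) →ₗ[k] K :=
  LinearMap.mul' k K
    ∘ₗ TensorProduct.map (LinearMap.mul' k K ∘ₗ (TensorProduct.comm k K K).toLinearMap) .id
    ∘ₗ (TensorProduct.assoc k K K K).symm.toLinearMap
    ∘ₗ TensorProduct.map .id (TensorProduct.map .id (sigmaR k K H σ))

/-- The map `ι : H → K^{op} ⊗ H`, `h ↦ Σ σ_r(S⁻¹(h₍₂₎)) ⊗ h₍₁₎`. -/
def iotaH (σ : Module.Dual k K →ₗ[k] Module.Dual k H) (Sinv : H →ₗ[k] H) :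
    H →ₗ[k] K ⊗[k] H :=
  TensorProduct.map (sigmaR k K H σ ∘ₗ Sinv) .id
    ∘ₗ (TensorProduct.comm k H H).toLinearMap ∘ₗ Coalgebra.comul

/-- The map `π : K^{op} ⊗ H → K^{op}`, `κ ⊗ h ↦ κ σ_r(h)` (product written in `K`). -/
def piB (σ : Module.Dual k K →ₗ[k] Module.Dual k H) : K ⊗[k] H →ₗ[k] K :=
  LinearMap.mul' k K ∘ₗ TensorProduct.map .id (sigmaR k K H σ)

/-! The pairing axioms, read through `K ≅ K**`, say that `σ_r : H → K` is a bialgebra map.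
Hence `φ = σ_r ∘ S⁻¹` is an anti-algebra map preserving the counit. Anti-multiplicativity of `φ`
is exactly what makes `ι = (φ ⊗ id) ∘ flip ∘ Δ` multiplicative into `K^{op} ⊗ H`, and
`(ε ⊗ id) ∘ ι = id` gives injectivity. Since `Δ` of the bialgebra `K` is multiplicative,
`π(κ ⊗ h) = κ σ_r(h)` is a coalgebra map, and the module property is associativity in `K`
together with multiplicativity of `σ_r`. -/

section Coalgebra

variable {R C M : Type*} [CommSemiring R] [AddCommMonoid C] [Module R C] [Coalgebra R C]
  [AddCommMonoid M] [Module R M]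

theorem injective_map_comm_comul_of_comp_eq_counit {φ : C →ₗ[R] M} (ψ : M →ₗ[R] R)
    (hφ : ψ ∘ₗ φ = counit) :
    Function.Injective
      (TensorProduct.map φ LinearMap.id ∘ₗ (TensorProduct.comm R C C).toLinearMap ∘ₗ comul) := by
  refine Function.LeftInverse.injective
    (g := TensorProduct.lid R C ∘ₗ TensorProduct.map ψ LinearMap.id) fun c => ?_
  simp only [LinearMap.comp_apply, LinearEquiv.coe_coe, TensorProduct.map_comm, lid_comm]
  rw [TensorProduct.map_map, LinearMap.id_comp, hφ, ← LinearMap.lTensor_def, lTensor_counit_comul,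
    TensorProduct.rid_tmul, one_smul]

end Coalgebra

section HopfAlgebra

variable {R A : Type*} [CommSemiring R] [Semiring A] [HopfAlgebra R A] {T : A →ₗ[R] A}

open HopfAlgebra

theorem HopfAlgebra.map_one_of_comp_antipode_eq_id (hT : T ∘ₗ antipode R = .id) : T 1 = 1 := by
  simpa using LinearMap.congr_fun hT 1

theorem HopfAlgebra.counit_apply_of_antipode_comp_eq_id (hT : antipode R ∘ₗ T = .id) (a : A) :
    counit (R := R) (T a) = counit a := by
  simpa using congr_arg (counit (R := R)) (LinearMap.congr_fun hT a)

theorem HopfAlgebra.map_mul_antidistrib_of_inverse_antipode (hT₁ : T ∘ₗ antipode R = .id)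
    (hT₂ : antipode R ∘ₗ T = .id) (a b : A) : T (a * b) = T b * T a := by
  have hTS : ∀ x, T (antipode R x) = x := LinearMap.congr_fun hT₁
  have hST : ∀ x, antipode R (T x) = x := LinearMap.congr_fun hT₂
  conv_lhs => rw [← hST a, ← hST b, ← antipode_mul_antidistrib, hTS]

end HopfAlgebra

section DualDistrib

variable {R M N : Type*} [CommRing R] [AddCommGroup M] [Module R M] [AddCommGroup N] [Module R N]
  [Module.Free R M] [Module.Finite R M] [Module.Free R N] [Module.Finite R N]

theorem TensorProduct.dualDistribEquiv_tmul_apply (f : Module.Dual R M) (g : Module.Dual R N)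
    (z : M ⊗[R] N) :
    dualDistribEquiv R M N (f ⊗ₜ g) z = LinearMap.mul' R R (TensorProduct.map f g z) :=
  rfl

theorem TensorProduct.dualDistribEquiv_apply_tmul (u : Module.Dual R M ⊗[R] Module.Dual R N)
    (x : M) (y : N) :
    dualDistribEquiv R M N u (x ⊗ₜ y) =
      LinearMap.mul' R R
        (TensorProduct.map (Module.Dual.eval R M x) (Module.Dual.eval R N y) u) := by
  induction u using TensorProduct.induction_on with
  | zero => simp
  | tmul f g => simp
  | add u v hu hv => simp only [map_add, LinearMap.add_apply, hu, hv]

end DualDistrib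

section TensorAlgebra

variable {k K H}
omit [Module.Finite k K] [Module.Finite k H]

@[simp]
theorem mulB_tmul (x u : K) (y v : H) :
    mulB k K H ((x ⊗ₜ y) ⊗ₜ (u ⊗ₜ v)) = (u * x) ⊗ₜ (y * v) := by
  simp [mulB, opMul]

theorem map_comm_mul_eq_mulB {φ : H →ₗ[k] K} (hφ : ∀ a b, φ (a * b) = φ b * φ a)
    (u v : H ⊗[k] H) :
    TensorProduct.map φ LinearMap.id (TensorProduct.comm k H H (u * v)) =
      mulB k K H (TensorProduct.map φ LinearMap.id (TensorProduct.comm k H H u) ⊗ₜ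
        TensorProduct.map φ LinearMap.id (TensorProduct.comm k H H v)) := by
  induction u using TensorProduct.induction_on with
  | zero => simp
  | add u₁ u₂ h₁ h₂ => simp only [add_mul, map_add, TensorProduct.add_tmul, h₁, h₂]
  | tmul a b =>
    induction v using TensorProduct.induction_on with
    | zero => simp
    | add v₁ v₂ h₁ h₂ => simp only [mul_add, map_add, TensorProduct.tmul_add, h₁, h₂]
    | tmul c d => simp [hφ]

end TensorAlgebra

section PairingMap

variable {k K H} {σ : Module.Dual k K →ₗ[k] Module.Dual k H}
omit [Module.Finite k H]

@[simp]
theorem apply_sigmaR (f : Module.Dual k K) (h : H) : f (sigmaR k K H σ h) = σ f h := by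
  simp [sigmaR]

theorem dual_comp_sigmaR (f : Module.Dual k K) : f ∘ₗ sigmaR k K H σ = σ f :=
  LinearMap.ext (apply_sigmaR f)

theorem sigmaR_eq_iff {h : H} {x : K} : sigmaR k K H σ h = x ↔ ∀ f, σ f h = f x := by
  refine ⟨fun hx f => by rw [← hx, apply_sigmaR], fun hx => ?_⟩
  exact Module.eval_apply_injective k (LinearMap.ext fun f => by simp [hx])

theorem sigmaR_one (pair_one_right : ∀ f : Module.Dual k K, σ f 1 = f 1) :
    sigmaR k K H σ 1 = 1 :=
  sigmaR_eq_iff.2 pair_one_right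

theorem sigmaR_mul
    (pair_mul_right : ∀ (f : Module.Dual k K) (h h' : H),
      σ f (h * h') =
        (LinearMap.mul' k k ∘ₗ
          TensorProduct.map (LinearMap.applyₗ h ∘ₗ σ) (LinearMap.applyₗ h' ∘ₗ σ))
          (dcomul k K f))
    (h h' : H) :
    sigmaR k K H σ (h * h') = sigmaR k K H σ h * sigmaR k K H σ h' := by
  refine sigmaR_eq_iff.2 fun f => ?_
  have hσ : ∀ x : H, LinearMap.applyₗ x ∘ₗ σ = Module.Dual.eval k K (sigmaR k K H σ x) :=
    fun x => LinearMap.ext fun f => (apply_sigmaR f x).symm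
  rw [pair_mul_right, hσ, hσ, LinearMap.comp_apply, ← TensorProduct.dualDistribEquiv_apply_tmul,
    dcomul, LinearMap.comp_apply, LinearEquiv.coe_coe, LinearEquiv.apply_symm_apply]
  rfl

theorem counit_sigmaR (pair_one_left : σ Coalgebra.counit = Coalgebra.counit) (h : H) :
    counit (R := k) (sigmaR k K H σ h) = counit h := by
  rw [apply_sigmaR, pair_one_left]

theorem comul_sigmaR
    (pair_mul_left : ∀ f g : Module.Dual k K, σ (fconv k K f g) = fconv k H (σ f) (σ g))
    (h : H) :
    comul (R := k) (sigmaR k K H σ h) =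
      TensorProduct.map (sigmaR k K H σ) (sigmaR k K H σ) (comul h) := by
  refine Module.eval_apply_injective k (LinearMap.ext fun φ => ?_)
  obtain ⟨u, rfl⟩ := (TensorProduct.dualDistribEquiv k K K).surjective φ
  induction u using TensorProduct.induction_on with
  | zero => simp
  | add u v hu hv => simpa only [map_add, LinearMap.add_apply] using congr($hu + $hv)
  | tmul f g =>
    simp only [Module.Dual.eval_apply, TensorProduct.dualDistribEquiv_tmul_apply, map_map,
      dual_comp_sigmaR]
    exact (apply_sigmaR (fconv k K f g) h).trans (by rw [pair_mul_left]; rfl)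

variable {Sinv : H →ₗ[k] H}

theorem iotaH_mul (hφ : ∀ a b, sigmaR k K H σ (Sinv (a * b)) =
      sigmaR k K H σ (Sinv b) * sigmaR k K H σ (Sinv a)) (h h' : H) :
    iotaH k K H σ Sinv (h * h') = mulB k K H (iotaH k K H σ Sinv h ⊗ₜ iotaH k K H σ Sinv h') := by
  simp only [iotaH, LinearMap.comp_apply, Bialgebra.comul_mul]
  exact map_comm_mul_eq_mulB hφ _ _

@[simp]
theorem piB_tmul (κ : K) (h : H) : piB k K H σ (κ ⊗ₜ h) = κ * sigmaR k K H σ h := by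
  simp [piB]

theorem map_piB_tensorTensorTensorComm (u : K ⊗[k] K) (v : H ⊗[k] H) :
    TensorProduct.map (piB k K H σ) (piB k K H σ)
        (TensorProduct.tensorTensorTensorComm k K K H H (u ⊗ₜ v)) =
      u * TensorProduct.map (sigmaR k K H σ) (sigmaR k K H σ) v := by
  induction u using TensorProduct.induction_on with
  | zero => simp
  | add u₁ u₂ h₁ h₂ => simp only [add_mul, map_add, TensorProduct.add_tmul, h₁, h₂]
  | tmul a b =>
    induction v using TensorProduct.induction_on with
    | zero => simp
    | add v₁ v₂ h₁ h₂ => simp only [mul_add, map_add, TensorProduct.tmul_add, h₁, h₂]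
    | tmul c d => simp

end PairingMap

/-- The map `ι : H → K^{op} ⊗ H`, `h ↦ Σ σ_r(S⁻¹(h₍₂₎)) ⊗ h₍₁₎`, is an
injective algebra homomorphism, and the map `π : K^{op} ⊗ H → K^{op}`, `κ ⊗ h ↦ κ σ_r(h)`,
is a surjective coalgebra homomorphism which is a map of right `K^{op} ⊗ H`-modules
(where `K^{op}` carries the action `l ⊗ (κ ⊗ h) ↦ κ l σ_r(h)`). -/
theorem iota_pi_properties (σ : Module.Dual k K →ₗ[k] Module.Dual k H)
    (pair_mul_left : ∀ f g : Module.Dual k K, σ (fconv k K f g) = fconv k H (σ f) (σ g))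
    (pair_mul_right : ∀ (f : Module.Dual k K) (h h' : H),
      σ f (h * h') =
        (LinearMap.mul' k k ∘ₗ
          TensorProduct.map (LinearMap.applyₗ h ∘ₗ σ) (LinearMap.applyₗ h' ∘ₗ σ))
          (dcomul k K f))
    (pair_one_left : σ Coalgebra.counit = Coalgebra.counit)
    (pair_one_right : ∀ f : Module.Dual k K, σ f 1 = f 1)
    (Sinv : H →ₗ[k] H)
    (hSinv₁ : Sinv ∘ₗ HopfAlgebra.antipode (R := k) = LinearMap.id)
    (hSinv₂ : HopfAlgebra.antipode (R := k) ∘ₗ Sinv = LinearMap.id) :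
    -- ι is injective
    Function.Injective (iotaH k K H σ Sinv) ∧
    -- ι is an algebra homomorphism into K^{op} ⊗ H
    iotaH k K H σ Sinv ∘ₗ LinearMap.mul' k H =
      mulB k K H ∘ₗ TensorProduct.map (iotaH k K H σ Sinv) (iotaH k K H σ Sinv) ∧
    iotaH k K H σ Sinv 1 = oneB k K H ∧
    -- π is surjective
    Function.Surjective (piB k K H σ) ∧
    -- π is a coalgebra homomorphism
    Coalgebra.comul ∘ₗ piB k K H σ =
      TensorProduct.map (piB k K H σ) (piB k K H σ) ∘ₗ comulB k K H ∧
    Coalgebra.counit ∘ₗ piB k K H σ = epsB k K H ∧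
    -- π is a map of right K^{op} ⊗ H-modules
    piB k K H σ ∘ₗ mulB k K H = actK k K H σ ∘ₗ TensorProduct.map (piB k K H σ) .id := by
  have σ_mul := sigmaR_mul pair_mul_right
  have σ_one := sigmaR_one (H := H) pair_one_right
  have Sinv_one := HopfAlgebra.map_one_of_comp_antipode_eq_id hSinv₁
  refine ⟨?_, ?_, ?_, ?_, ?_, ?_, ?_⟩
  · refine injective_map_comm_comul_of_comp_eq_counit counit (LinearMap.ext fun h => ?_)
    simp [counit_sigmaR pair_one_left, HopfAlgebra.counit_apply_of_antipode_comp_eq_id hSinv₂]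
  · refine TensorProduct.ext' fun h h' => ?_
    refine iotaH_mul (fun a b => ?_) h h'
    rw [HopfAlgebra.map_mul_antidistrib_of_inverse_antipode hSinv₁ hSinv₂, σ_mul]
  · simp [iotaH, oneB, Algebra.TensorProduct.one_def, Sinv_one, σ_one]
  · exact fun κ => ⟨κ ⊗ₜ 1, by rw [piB_tmul, σ_one, mul_one]⟩
  · refine TensorProduct.ext' fun κ h => ?_
    simp [comulB, Bialgebra.comul_mul, comul_sigmaR pair_mul_left, map_piB_tensorTensorTensorComm]
  · refine TensorProduct.ext' fun κ h => ?_
    simp [epsB, counit_sigmaR pair_one_left]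
  · refine TensorProduct.ext_fourfold' fun κ h κ' h' => ?_
    simp [actK, σ_mul, mul_assoc]
end
end

section
/- Let M, N be objects of {}^K_K𝓜^K_H (two-sided two-cosided relative Hopf modules: K-H-bimodules and K-K-bicomodules satisfying the four compatibility conditions (1)-(4) below). Then the cotensor product M □_K N = {Σᵢ mᵢ⊗nᵢ : Σᵢ mᵢ^{(0)}⊗mᵢ^{(1)}⊗nᵢ = Σᵢ mᵢ⊗nᵢ^{(-1)}⊗nᵢ^{(0)}} is stable under the diagonal right H-action (Σᵢmᵢ⊗nᵢ)·h = Σᵢ mᵢ·h₁ ⊗ nᵢ·h₂ and under the diagonal left K-action, so M □_K N is again a K-H-bimodule. -/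
open TensorProduct LinearMap Coalgebra Module

set_option maxHeartbeats 1000000
set_option synthInstance.maxHeartbeats 400000

noncomputable section

variable (k : Type) [Field k]

variable (K H : Type) [Ring K] [Ring H] [HopfAlgebra k K] [HopfAlgebra k H]
  [Module.Finite k K] [Module.Finite k H]

section
variable (σ : Module.Dual k K →ₗ[k] Module.Dual k H)
variable (M : Type) [AddCommGroup M] [Module k M]

/-- `M` is an object of the category `{}^K_K𝓜^K_H` of two-sided two-cosided relative Hopf
modules: a `K`-`H`-bimodule and `K`-`K`-bicomodule such that both comodule structures
preserve both module structures (the four compatibility conditions (1)–(4)). -/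
def IsRelHopfModule (lK : K ⊗[k] M →ₗ[k] M) (rH : M ⊗[k] H →ₗ[k] M)
    (ρl : M →ₗ[k] K ⊗[k] M) (ρr : M →ₗ[k] M ⊗[k] K) : Prop :=
  -- left K-module
  (lK ∘ₗ TensorProduct.map (LinearMap.mul' k K) .id =
    lK ∘ₗ TensorProduct.map .id lK ∘ₗ (TensorProduct.assoc k K K M).toLinearMap) ∧
  (∀ m : M, lK ((1 : K) ⊗ₜ m) = m) ∧
  -- right H-module
  (rH ∘ₗ TensorProduct.map rH .id =
    rH ∘ₗ TensorProduct.map .id (LinearMap.mul' k H)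
      ∘ₗ (TensorProduct.assoc k M H H).toLinearMap) ∧
  (∀ m : M, rH (m ⊗ₜ (1 : H)) = m) ∧
  -- bimodule: the two actions commute
  (rH ∘ₗ TensorProduct.map lK .id =
    lK ∘ₗ TensorProduct.map .id rH ∘ₗ (TensorProduct.assoc k K M H).toLinearMap) ∧
  -- left K-comodule
  (TensorProduct.map .id ρl ∘ₗ ρl =
    (TensorProduct.assoc k K K M).toLinearMap
      ∘ₗ TensorProduct.map Coalgebra.comul .id ∘ₗ ρl) ∧
  ((TensorProduct.lid k M).toLinearMap
      ∘ₗ TensorProduct.map Coalgebra.counit .id ∘ₗ ρl = LinearMap.id) ∧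
  -- right K-comodule
  ((TensorProduct.assoc k M K K).toLinearMap ∘ₗ TensorProduct.map ρr .id ∘ₗ ρr =
    TensorProduct.map .id Coalgebra.comul ∘ₗ ρr) ∧
  ((TensorProduct.rid k M).toLinearMap
      ∘ₗ TensorProduct.map .id Coalgebra.counit ∘ₗ ρr = LinearMap.id) ∧
  -- bicomodule: the two coactions commute
  (TensorProduct.map .id ρr ∘ₗ ρl =
    (TensorProduct.assoc k K M K).toLinearMap ∘ₗ TensorProduct.map ρl .id ∘ₗ ρr) ∧
  -- (1) Σ (κ·m)⁽⁻¹⁾ ⊗ (κ·m)⁽⁰⁾ = Σ κ₍₁₎ m⁽⁻¹⁾ ⊗ κ₍₂₎·m⁽⁰⁾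
  (ρl ∘ₗ lK = TensorProduct.map (LinearMap.mul' k K) lK
    ∘ₗ (TensorProduct.tensorTensorTensorComm k K K K M).toLinearMap
    ∘ₗ TensorProduct.map Coalgebra.comul ρl) ∧
  -- (2) Σ (m·h)⁽⁻¹⁾ ⊗ (m·h)⁽⁰⁾ = Σ m⁽⁻¹⁾ σ_r(h₍₁₎) ⊗ m⁽⁰⁾·h₍₂₎
  (ρl ∘ₗ rH = TensorProduct.map
      (LinearMap.mul' k K ∘ₗ TensorProduct.map .id (sigmaR k K H σ)) rH
    ∘ₗ (TensorProduct.tensorTensorTensorComm k K M H H).toLinearMap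
    ∘ₗ TensorProduct.map ρl Coalgebra.comul) ∧
  -- (3) Σ (κ·m)⁽⁰⁾ ⊗ (κ·m)⁽¹⁾ = Σ κ₍₁₎·m⁽⁰⁾ ⊗ κ₍₂₎ m⁽¹⁾
  (ρr ∘ₗ lK = TensorProduct.map lK (LinearMap.mul' k K)
    ∘ₗ (TensorProduct.tensorTensorTensorComm k K K M K).toLinearMap
    ∘ₗ TensorProduct.map Coalgebra.comul ρr) ∧
  -- (4) Σ (m·h)⁽⁰⁾ ⊗ (m·h)⁽¹⁾ = Σ m⁽⁰⁾·h₍₁₎ ⊗ m⁽¹⁾ σ_r(h₍₂₎)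
  (ρr ∘ₗ rH = TensorProduct.map rH
      (LinearMap.mul' k K ∘ₗ TensorProduct.map .id (sigmaR k K H σ))
    ∘ₗ (TensorProduct.tensorTensorTensorComm k M K H H).toLinearMap
    ∘ₗ TensorProduct.map ρr Coalgebra.comul)

end

section
variable (M N : Type) [AddCommGroup M] [Module k M] [AddCommGroup N] [Module k N]

/-- Membership in the cotensor product `M □_K N ⊆ M ⊗ N`:
`Σᵢ mᵢ⁽⁰⁾ ⊗ mᵢ⁽¹⁾ ⊗ nᵢ = Σᵢ mᵢ ⊗ nᵢ⁽⁻¹⁾ ⊗ nᵢ⁽⁰⁾`. -/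
def memCotensor (ρrM : M →ₗ[k] M ⊗[k] K) (ρlN : N →ₗ[k] K ⊗[k] N)
    (t : M ⊗[k] N) : Prop :=
  TensorProduct.map ρrM .id t =
    (TensorProduct.assoc k M K N).symm.toLinearMap (TensorProduct.map .id ρlN t)

/-- The diagonal right `H`-action on `M ⊗ N`. -/
def diagActH (rHM : M ⊗[k] H →ₗ[k] M) (rHN : N ⊗[k] H →ₗ[k] N) :
    (M ⊗[k] N) ⊗[k] H →ₗ[k] M ⊗[k] N :=
  TensorProduct.map rHM rHN
    ∘ₗ (TensorProduct.tensorTensorTensorComm k M N H H).toLinearMap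
    ∘ₗ TensorProduct.map .id Coalgebra.comul

/-- The diagonal left `K`-action on `M ⊗ N`. -/
def diagActK (lKM : K ⊗[k] M →ₗ[k] M) (lKN : K ⊗[k] N →ₗ[k] N) :
    K ⊗[k] (M ⊗[k] N) →ₗ[k] M ⊗[k] N :=
  TensorProduct.map lKM lKN
    ∘ₗ (TensorProduct.tensorTensorTensorComm k K K M N).toLinearMap
    ∘ₗ TensorProduct.map Coalgebra.comul .id

end

section
variable (σ : Module.Dual k K →ₗ[k] Module.Dual k H)
variable (M N : Type) [AddCommGroup M] [Module k M] [AddCommGroup N] [Module k N]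

/-- Auxiliary map for the right `H`-stability:
`((x ⊗ κ) ⊗ n) ⊗ h ↦ Σ (x·h₍₁₎ ⊗ κ σ_r(h₍₂₎)) ⊗ n·h₍₃₎`. -/
def PhiH (rHM : M ⊗[k] H →ₗ[k] M) (rHN : N ⊗[k] H →ₗ[k] N) :
    ((M ⊗[k] K) ⊗[k] N) ⊗[k] H →ₗ[k] (M ⊗[k] K) ⊗[k] N :=
  TensorProduct.map
      (TensorProduct.map rHM (LinearMap.mul' k K ∘ₗ TensorProduct.map .id (sigmaR k K H σ))) rHN
    ∘ₗ TensorProduct.map (TensorProduct.tensorTensorTensorComm k M K H H).toLinearMap .id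
    ∘ₗ (TensorProduct.tensorTensorTensorComm k (M ⊗[k] K) N (H ⊗[k] H) H).toLinearMap
    ∘ₗ TensorProduct.map .id (TensorProduct.map Coalgebra.comul .id ∘ₗ Coalgebra.comul)

/-- Auxiliary map for the left `K`-stability:
`κ ⊗ ((x ⊗ l) ⊗ n) ↦ Σ (κ₍₁₎·x ⊗ κ₍₂₎ l) ⊗ κ₍₃₎·n`. -/
def PsiK (lKM : K ⊗[k] M →ₗ[k] M) (lKN : K ⊗[k] N →ₗ[k] N) :
    K ⊗[k] ((M ⊗[k] K) ⊗[k] N) →ₗ[k] (M ⊗[k] K) ⊗[k] N :=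
  TensorProduct.map (TensorProduct.map lKM (LinearMap.mul' k K)) lKN
    ∘ₗ TensorProduct.map (TensorProduct.tensorTensorTensorComm k K K M K).toLinearMap .id
    ∘ₗ (TensorProduct.tensorTensorTensorComm k (K ⊗[k] K) K (M ⊗[k] K) N).toLinearMap
    ∘ₗ TensorProduct.map (TensorProduct.map Coalgebra.comul .id ∘ₗ Coalgebra.comul) .id

end

/-- Let `M`, `N` be objects of `{}^K_K𝓜^K_H`.  Then the cotensor
product `M □_K N ⊆ M ⊗ N` is stable under the diagonal right `H`-action
`(Σᵢ mᵢ ⊗ nᵢ)·h = Σᵢ mᵢ·h₍₁₎ ⊗ nᵢ·h₍₂₎` and under the diagonal left `K`-action, so that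
`M □_K N` is again a `K`-`H`-bimodule (the diagonal actions satisfy the bimodule axioms). -/
theorem cotensor_stable_bimodule (σ : Module.Dual k K →ₗ[k] Module.Dual k H)
    (pair_mul_left : ∀ f g : Module.Dual k K, σ (fconv k K f g) = fconv k H (σ f) (σ g))
    (pair_mul_right : ∀ (f : Module.Dual k K) (h h' : H),
      σ f (h * h') =
        (LinearMap.mul' k k ∘ₗ
          TensorProduct.map (LinearMap.applyₗ h ∘ₗ σ) (LinearMap.applyₗ h' ∘ₗ σ))
          (dcomul k K f))
    (pair_one_left : σ Coalgebra.counit = Coalgebra.counit)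
    (pair_one_right : ∀ f : Module.Dual k K, σ f 1 = f 1)
    (M N : Type) [AddCommGroup M] [Module k M] [Module.Finite k M]
    [AddCommGroup N] [Module k N] [Module.Finite k N]
    (lKM : K ⊗[k] M →ₗ[k] M) (rHM : M ⊗[k] H →ₗ[k] M)
    (ρlM : M →ₗ[k] K ⊗[k] M) (ρrM : M →ₗ[k] M ⊗[k] K)
    (lKN : K ⊗[k] N →ₗ[k] N) (rHN : N ⊗[k] H →ₗ[k] N)
    (ρlN : N →ₗ[k] K ⊗[k] N) (ρrN : N →ₗ[k] N ⊗[k] K)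
    (hM : IsRelHopfModule k K H σ M lKM rHM ρlM ρrM)
    (hN : IsRelHopfModule k K H σ N lKN rHN ρlN ρrN) :
    -- stability of the cotensor product under the diagonal right H-action
    (∀ t : M ⊗[k] N, memCotensor k K M N ρrM ρlN t →
      ∀ h : H, memCotensor k K M N ρrM ρlN (diagActH k H M N rHM rHN (t ⊗ₜ h))) ∧
    -- stability under the diagonal left K-action
    (∀ t : M ⊗[k] N, memCotensor k K M N ρrM ρlN t →
      ∀ κ : K, memCotensor k K M N ρrM ρlN (diagActK k K M N lKM lKN (κ ⊗ₜ t))) ∧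
    -- the diagonal actions make M ⊗ N (hence M □_K N) a K-H-bimodule
    (diagActK k K M N lKM lKN ∘ₗ TensorProduct.map (LinearMap.mul' k K) .id =
      diagActK k K M N lKM lKN ∘ₗ TensorProduct.map .id (diagActK k K M N lKM lKN)
        ∘ₗ (TensorProduct.assoc k K K (M ⊗[k] N)).toLinearMap) ∧
    (∀ t : M ⊗[k] N, diagActK k K M N lKM lKN ((1 : K) ⊗ₜ t) = t) ∧
    (diagActH k H M N rHM rHN ∘ₗ TensorProduct.map (diagActH k H M N rHM rHN) .id =
      diagActH k H M N rHM rHN ∘ₗ TensorProduct.map .id (LinearMap.mul' k H)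
        ∘ₗ (TensorProduct.assoc k (M ⊗[k] N) H H).toLinearMap) ∧
    (∀ t : M ⊗[k] N, diagActH k H M N rHM rHN (t ⊗ₜ (1 : H)) = t) ∧
    (diagActH k H M N rHM rHN ∘ₗ TensorProduct.map (diagActK k K M N lKM lKN) .id =
      diagActK k K M N lKM lKN ∘ₗ TensorProduct.map .id (diagActH k H M N rHM rHN)
        ∘ₗ (TensorProduct.assoc k K (M ⊗[k] N) H).toLinearMap) := by
  obtain ⟨hM1, hM2, hM3, hM4, hM5, hM6, hM7, hM8, hM9, hM10, hM11, hM12, hM13, hM14⟩ := hM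
  obtain ⟨hN1, hN2, hN3, hN4, hN5, hN6, hN7, hN8, hN9, hN10, hN11, hN12, hN13, hN14⟩ := hN
  -- element forms of the module axioms and compatibility conditions
  have hM1' : ∀ (a c : K) (m : M), lKM ((a * c) ⊗ₜ m) = lKM (a ⊗ₜ lKM (c ⊗ₜ m)) := by
    intro a c m; simpa using LinearMap.congr_fun hM1 ((a ⊗ₜ c) ⊗ₜ m)
  have hN1' : ∀ (a c : K) (n : N), lKN ((a * c) ⊗ₜ n) = lKN (a ⊗ₜ lKN (c ⊗ₜ n)) := by
    intro a c n; simpa using LinearMap.congr_fun hN1 ((a ⊗ₜ c) ⊗ₜ n)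
  have hM3' : ∀ (m : M) (a c : H), rHM (rHM (m ⊗ₜ a) ⊗ₜ c) = rHM (m ⊗ₜ (a * c)) := by
    intro m a c; simpa using LinearMap.congr_fun hM3 ((m ⊗ₜ a) ⊗ₜ c)
  have hN3' : ∀ (n : N) (a c : H), rHN (rHN (n ⊗ₜ a) ⊗ₜ c) = rHN (n ⊗ₜ (a * c)) := by
    intro n a c; simpa using LinearMap.congr_fun hN3 ((n ⊗ₜ a) ⊗ₜ c)
  have hM5' : ∀ (a : K) (m : M) (c : H),
      rHM (lKM (a ⊗ₜ m) ⊗ₜ c) = lKM (a ⊗ₜ rHM (m ⊗ₜ c)) := by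
    intro a m c; simpa using LinearMap.congr_fun hM5 ((a ⊗ₜ m) ⊗ₜ c)
  have hN5' : ∀ (a : K) (n : N) (c : H),
      rHN (lKN (a ⊗ₜ n) ⊗ₜ c) = lKN (a ⊗ₜ rHN (n ⊗ₜ c)) := by
    intro a n c; simpa using LinearMap.congr_fun hN5 ((a ⊗ₜ n) ⊗ₜ c)
  have hM13' : ∀ (a : K) (m : M), ρrM (lKM (a ⊗ₜ m)) =
      TensorProduct.map lKM (LinearMap.mul' k K)
        (TensorProduct.tensorTensorTensorComm k K K M K (Coalgebra.comul a ⊗ₜ ρrM m)) := by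
    intro a m; simpa using LinearMap.congr_fun hM13 (a ⊗ₜ m)
  have hM14' : ∀ (m : M) (a : H), ρrM (rHM (m ⊗ₜ a)) =
      TensorProduct.map rHM (LinearMap.mul' k K ∘ₗ TensorProduct.map .id (sigmaR k K H σ))
        (TensorProduct.tensorTensorTensorComm k M K H H (ρrM m ⊗ₜ Coalgebra.comul a)) := by
    intro m a; simpa using LinearMap.congr_fun hM14 (m ⊗ₜ a)
  have hN11' : ∀ (a : K) (n : N), ρlN (lKN (a ⊗ₜ n)) =
      TensorProduct.map (LinearMap.mul' k K) lKN
        (TensorProduct.tensorTensorTensorComm k K K K N (Coalgebra.comul a ⊗ₜ ρlN n)) := by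
    intro a n; simpa using LinearMap.congr_fun hN11 (a ⊗ₜ n)
  have hN12' : ∀ (n : N) (a : H), ρlN (rHN (n ⊗ₜ a)) =
      TensorProduct.map (LinearMap.mul' k K ∘ₗ TensorProduct.map .id (sigmaR k K H σ)) rHN
        (TensorProduct.tensorTensorTensorComm k K N H H (ρlN n ⊗ₜ Coalgebra.comul a)) := by
    intro n a; simpa using LinearMap.congr_fun hN12 (n ⊗ₜ a)
  -- coassociativity in convenient form
  have coasH : ∀ h : H,
      TensorProduct.map (Coalgebra.comul (R := k)) (.id : H →ₗ[k] H) (Coalgebra.comul h) =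
        (TensorProduct.assoc k H H H).symm
          (TensorProduct.map (.id : H →ₗ[k] H) Coalgebra.comul (Coalgebra.comul h)) := by
    intro h
    simpa [LinearMap.rTensor, LinearMap.lTensor] using
      (Coalgebra.coassoc_symm_apply (R := k) h).symm
  have coasK : ∀ a : K,
      TensorProduct.map (Coalgebra.comul (R := k)) (.id : K →ₗ[k] K) (Coalgebra.comul a) =
        (TensorProduct.assoc k K K K).symm
          (TensorProduct.map (.id : K →ₗ[k] K) Coalgebra.comul (Coalgebra.comul a)) := by
    intro a
    simpa [LinearMap.rTensor, LinearMap.lTensor] using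
      (Coalgebra.coassoc_symm_apply (R := k) a).symm
  -- the two key commutation identities for the right H-action
  have hA : TensorProduct.map ρrM (.id : N →ₗ[k] N) ∘ₗ diagActH k H M N rHM rHN =
      PhiH k K H σ M N rHM rHN ∘ₗ
        TensorProduct.map (TensorProduct.map ρrM (.id : N →ₗ[k] N)) (.id : H →ₗ[k] H) := by
    apply TensorProduct.ext'
    intro t h
    induction t using TensorProduct.induction_on with
    | zero => simp
    | add x y hx hy => simp only [add_tmul, tmul_add, map_add, add_mul, mul_add, LinearEquiv.map_add] at hx hy ⊢; rw [hx, hy]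
    | tmul m n =>
      simp only [diagActH, PhiH, LinearMap.comp_apply, TensorProduct.map_tmul,
        LinearEquiv.coe_coe, LinearMap.id_coe, id_eq]
      generalize Coalgebra.comul (R := k) h = u
      induction u using TensorProduct.induction_on with
      | zero => simp
      | add x y hx hy =>
        simp only [add_tmul, tmul_add, map_add, add_mul, mul_add, LinearEquiv.map_add] at hx hy ⊢; rw [hx, hy]
      | tmul a b =>
        simp only [TensorProduct.tensorTensorTensorComm_tmul, TensorProduct.map_tmul,
          LinearMap.id_coe, id_eq, LinearEquiv.coe_coe]
        rw [hM14']
  have hB : (TensorProduct.assoc k M K N).symm.toLinearMap ∘ₗ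
        TensorProduct.map (.id : M →ₗ[k] M) ρlN ∘ₗ diagActH k H M N rHM rHN =
      PhiH k K H σ M N rHM rHN ∘ₗ
        TensorProduct.map ((TensorProduct.assoc k M K N).symm.toLinearMap ∘ₗ
          TensorProduct.map (.id : M →ₗ[k] M) ρlN) (.id : H →ₗ[k] H) := by
    apply TensorProduct.ext'
    intro t h
    induction t using TensorProduct.induction_on with
    | zero => simp
    | add x y hx hy => simp only [add_tmul, tmul_add, map_add, add_mul, mul_add, LinearEquiv.map_add] at hx hy ⊢; rw [hx, hy]
    | tmul m n =>
      simp only [diagActH, PhiH, LinearMap.comp_apply, TensorProduct.map_tmul,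
        LinearEquiv.coe_coe, LinearMap.id_coe, id_eq]
      rw [coasH]
      generalize Coalgebra.comul (R := k) h = u
      induction u using TensorProduct.induction_on with
      | zero => simp
      | add x y hx hy =>
        simp only [add_tmul, tmul_add, map_add, add_mul, mul_add, LinearEquiv.map_add] at hx hy ⊢; rw [hx, hy]
      | tmul a b =>
        simp only [TensorProduct.tensorTensorTensorComm_tmul, TensorProduct.map_tmul,
          LinearMap.id_coe, id_eq, LinearEquiv.coe_coe]
        rw [hN12']
        generalize Coalgebra.comul (R := k) b = v
        generalize ρlN n = Y
        induction v using TensorProduct.induction_on with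
        | zero => simp
        | add x y hx hy =>
          simp only [add_tmul, tmul_add, map_add, add_mul, mul_add, LinearEquiv.map_add] at hx hy ⊢; rw [hx, hy]
        | tmul c d =>
          induction Y using TensorProduct.induction_on with
          | zero => simp
          | add x y hx hy =>
            simp only [add_tmul, tmul_add, map_add, add_mul, mul_add, LinearEquiv.map_add] at hx hy ⊢
            rw [hx, hy]
          | tmul κ yy =>
            simp [TensorProduct.tensorTensorTensorComm_tmul, LinearMap.mul'_apply]
  -- the two key commutation identities for the left K-action
  have hA' : TensorProduct.map ρrM (.id : N →ₗ[k] N) ∘ₗ diagActK k K M N lKM lKN =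
      PsiK k K M N lKM lKN ∘ₗ
        TensorProduct.map (.id : K →ₗ[k] K) (TensorProduct.map ρrM (.id : N →ₗ[k] N)) := by
    apply TensorProduct.ext'
    intro a t
    induction t using TensorProduct.induction_on with
    | zero => simp
    | add x y hx hy => simp only [add_tmul, tmul_add, map_add, add_mul, mul_add, LinearEquiv.map_add] at hx hy ⊢; rw [hx, hy]
    | tmul m n =>
      simp only [diagActK, PsiK, LinearMap.comp_apply, TensorProduct.map_tmul,
        LinearEquiv.coe_coe, LinearMap.id_coe, id_eq]
      generalize Coalgebra.comul (R := k) a = u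
      induction u using TensorProduct.induction_on with
      | zero => simp
      | add x y hx hy =>
        simp only [add_tmul, tmul_add, map_add, add_mul, mul_add, LinearEquiv.map_add] at hx hy ⊢; rw [hx, hy]
      | tmul a b =>
        simp only [TensorProduct.tensorTensorTensorComm_tmul, TensorProduct.map_tmul,
          LinearMap.id_coe, id_eq, LinearEquiv.coe_coe]
        rw [hM13']
  have hB' : (TensorProduct.assoc k M K N).symm.toLinearMap ∘ₗ
        TensorProduct.map (.id : M →ₗ[k] M) ρlN ∘ₗ diagActK k K M N lKM lKN =
      PsiK k K M N lKM lKN ∘ₗ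
        TensorProduct.map (.id : K →ₗ[k] K) ((TensorProduct.assoc k M K N).symm.toLinearMap ∘ₗ
          TensorProduct.map (.id : M →ₗ[k] M) ρlN) := by
    apply TensorProduct.ext'
    intro a t
    induction t using TensorProduct.induction_on with
    | zero => simp
    | add x y hx hy => simp only [add_tmul, tmul_add, map_add, add_mul, mul_add, LinearEquiv.map_add] at hx hy ⊢; rw [hx, hy]
    | tmul m n =>
      simp only [diagActK, PsiK, LinearMap.comp_apply, TensorProduct.map_tmul,
        LinearEquiv.coe_coe, LinearMap.id_coe, id_eq]
      rw [coasK]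
      generalize Coalgebra.comul (R := k) a = u
      induction u using TensorProduct.induction_on with
      | zero => simp
      | add x y hx hy =>
        simp only [add_tmul, tmul_add, map_add, add_mul, mul_add, LinearEquiv.map_add] at hx hy ⊢; rw [hx, hy]
      | tmul a b =>
        simp only [TensorProduct.tensorTensorTensorComm_tmul, TensorProduct.map_tmul,
          LinearMap.id_coe, id_eq, LinearEquiv.coe_coe]
        rw [hN11']
        generalize Coalgebra.comul (R := k) b = v
        generalize ρlN n = Y
        induction v using TensorProduct.induction_on with
        | zero => simp
        | add x y hx hy =>
          simp only [add_tmul, tmul_add, map_add, add_mul, mul_add, LinearEquiv.map_add] at hx hy ⊢; rw [hx, hy]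
        | tmul c d =>
          induction Y using TensorProduct.induction_on with
          | zero => simp
          | add x y hx hy =>
            simp only [add_tmul, tmul_add, map_add, add_mul, mul_add, LinearEquiv.map_add] at hx hy ⊢
            rw [hx, hy]
          | tmul κ yy =>
            simp [TensorProduct.tensorTensorTensorComm_tmul, LinearMap.mul'_apply]
  refine ⟨?_, ?_, ?_, ?_, ?_, ?_, ?_⟩
  · -- stability under the right H-action
    intro t ht h
    simp only [memCotensor, LinearEquiv.coe_coe] at ht ⊢
    have e1 := LinearMap.congr_fun hA (t ⊗ₜ h)
    have e2 := LinearMap.congr_fun hB (t ⊗ₜ h)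
    simp only [LinearMap.comp_apply, TensorProduct.map_tmul, LinearMap.id_coe, id_eq,
      LinearEquiv.coe_coe] at e1 e2
    rw [e1, ht]
    exact e2.symm
  · -- stability under the left K-action
    intro t ht κ
    simp only [memCotensor, LinearEquiv.coe_coe] at ht ⊢
    have e1 := LinearMap.congr_fun hA' (κ ⊗ₜ t)
    have e2 := LinearMap.congr_fun hB' (κ ⊗ₜ t)
    simp only [LinearMap.comp_apply, TensorProduct.map_tmul, LinearMap.id_coe, id_eq,
      LinearEquiv.coe_coe] at e1 e2
    rw [e1, ht]
    exact e2.symm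
  · -- associativity of the left K-action
    apply TensorProduct.ext_threefold
    intro a b t
    simp only [LinearMap.comp_apply, TensorProduct.map_tmul, LinearMap.mul'_apply,
      TensorProduct.assoc_tmul, LinearMap.id_coe, id_eq, LinearEquiv.coe_coe,
      diagActK]
    rw [Bialgebra.comul_mul]
    generalize Coalgebra.comul (R := k) a = u
    generalize Coalgebra.comul (R := k) b = v
    induction t using TensorProduct.induction_on with
    | zero => simp
    | add x y hx hy => simp only [add_tmul, tmul_add, map_add, add_mul, mul_add, LinearEquiv.map_add] at hx hy ⊢; rw [hx, hy]
    | tmul m n =>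
      induction u using TensorProduct.induction_on with
      | zero => simp
      | add x y hx hy =>
        simp only [add_tmul, tmul_add, map_add, add_mul, mul_add, LinearEquiv.map_add] at hx hy ⊢; rw [hx, hy]
      | tmul a1 a2 =>
        induction v using TensorProduct.induction_on with
        | zero => simp
        | add x y hx hy =>
          simp only [add_tmul, tmul_add, map_add, add_mul, mul_add, LinearEquiv.map_add] at hx hy ⊢
          rw [hx, hy]
        | tmul b1 b2 =>
          simp only [Algebra.TensorProduct.tmul_mul_tmul,
            TensorProduct.tensorTensorTensorComm_tmul, TensorProduct.map_tmul,
            LinearMap.id_coe, id_eq, LinearEquiv.coe_coe]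
          rw [hM1', hN1']
  · -- unitality of the left K-action
    intro t
    induction t using TensorProduct.induction_on with
    | zero => simp
    | add x y hx hy => simp only [add_tmul, tmul_add, map_add, add_mul, mul_add, LinearEquiv.map_add] at hx hy ⊢; rw [hx, hy]
    | tmul m n =>
      simp [diagActK, Bialgebra.comul_one, Algebra.TensorProduct.one_def, hM2, hN2]
  · -- associativity of the right H-action
    apply TensorProduct.ext_threefold
    intro t h h'
    simp only [LinearMap.comp_apply, TensorProduct.map_tmul, LinearMap.mul'_apply,
      TensorProduct.assoc_tmul, LinearMap.id_coe, id_eq, LinearEquiv.coe_coe,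
      diagActH]
    rw [Bialgebra.comul_mul]
    generalize Coalgebra.comul (R := k) h = u
    generalize Coalgebra.comul (R := k) h' = v
    induction t using TensorProduct.induction_on with
    | zero => simp
    | add x y hx hy => simp only [add_tmul, tmul_add, map_add, add_mul, mul_add, LinearEquiv.map_add] at hx hy ⊢; rw [hx, hy]
    | tmul m n =>
      induction u using TensorProduct.induction_on with
      | zero => simp
      | add x y hx hy =>
        simp only [add_tmul, tmul_add, map_add, add_mul, mul_add, LinearEquiv.map_add] at hx hy ⊢
        rw [hx, hy]
      | tmul a1 a2 =>
        induction v using TensorProduct.induction_on with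
        | zero => simp
        | add x y hx hy =>
          simp only [add_tmul, tmul_add, map_add, add_mul, mul_add, LinearEquiv.map_add] at hx hy ⊢
          rw [hx, hy]
        | tmul b1 b2 =>
          simp only [Algebra.TensorProduct.tmul_mul_tmul,
            TensorProduct.tensorTensorTensorComm_tmul, TensorProduct.map_tmul,
            LinearMap.id_coe, id_eq, LinearEquiv.coe_coe]
          rw [hM3', hN3']
  · -- unitality of the right H-action
    intro t
    induction t using TensorProduct.induction_on with
    | zero => simp
    | add x y hx hy => simp only [add_tmul, tmul_add, map_add, add_mul, mul_add, LinearEquiv.map_add] at hx hy ⊢; rw [hx, hy]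
    | tmul m n =>
      simp [diagActH, Bialgebra.comul_one, Algebra.TensorProduct.one_def, hM4, hN4]
  · -- the two diagonal actions commute
    apply TensorProduct.ext_threefold
    intro κ t h
    simp only [LinearMap.comp_apply, TensorProduct.map_tmul, TensorProduct.assoc_tmul,
      LinearMap.id_coe, id_eq, LinearEquiv.coe_coe, diagActH, diagActK]
    generalize Coalgebra.comul (R := k) κ = u
    generalize Coalgebra.comul (R := k) h = v
    induction t using TensorProduct.induction_on with
    | zero => simp
    | add x y hx hy => simp only [add_tmul, tmul_add, map_add, add_mul, mul_add, LinearEquiv.map_add] at hx hy ⊢; rw [hx, hy]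
    | tmul m n =>
      induction u using TensorProduct.induction_on with
      | zero => simp
      | add x y hx hy =>
        simp only [add_tmul, tmul_add, map_add, add_mul, mul_add, LinearEquiv.map_add] at hx hy ⊢; rw [hx, hy]
      | tmul a1 a2 =>
        induction v using TensorProduct.induction_on with
        | zero => simp
        | add x y hx hy =>
          simp only [add_tmul, tmul_add, map_add, add_mul, mul_add, LinearEquiv.map_add] at hx hy ⊢
          rw [hx, hy]
        | tmul b1 b2 =>
          simp only [TensorProduct.tensorTensorTensorComm_tmul, TensorProduct.map_tmul,
            LinearMap.id_coe, id_eq, LinearEquiv.coe_coe]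
          rw [hM5', hN5']
end
end
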